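/- Let U ⊆ ℝ × ℝ² be open. Suppose n, c : U → ℝ are twice continuously differentiable on U and u : U → ℝ² is a function, and assume that for all (t,x) ∈ U: ∂_t n + u·∇n + ∂₁(n ∂₁c) + ∂₂(n ∂₂c) = Δn and ∂_t c + u·∇c + n c = Δc, where all spatial derivatives act in x. Then the function ñ := n·e^{−c} satisfies, for all (t,x) ∈ U, ∂_t ñ = Δñ + ∇ñ·∇c + ñ Δc − u·∇ñ + n c ñ − 2 ñ Δc. -/

import Mathlib

/-- Partial derivative in the time variable `t` of `f : ℝ × ℝ² → ℝ`. -/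
noncomputable def pt (f : ℝ × ℝ × ℝ → ℝ) (q : ℝ × ℝ × ℝ) : ℝ := fderiv ℝ f q (1, 0, 0)

/-- Partial derivative in the first spatial direction of `f : ℝ × ℝ² → ℝ`. -/
noncomputable def px1 (f : ℝ × ℝ × ℝ → ℝ) (q : ℝ × ℝ × ℝ) : ℝ := fderiv ℝ f q (0, 1, 0)

/-- Partial derivative in the second spatial direction of `f : ℝ × ℝ² → ℝ`. -/
noncomputable def px2 (f : ℝ × ℝ × ℝ → ℝ) (q : ℝ × ℝ × ℝ) : ℝ := fderiv ℝ f q (0, 0, 1)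

/-- Spatial Laplacian `Δf = ∂₁∂₁f + ∂₂∂₂f` of `f : ℝ × ℝ² → ℝ`. -/
noncomputable def plap (f : ℝ × ℝ × ℝ → ℝ) (q : ℝ × ℝ × ℝ) : ℝ :=
  px1 (fun r => px1 f r) q + px2 (fun r => px2 f r) q

private lemma fd_mul {f g : ℝ × ℝ × ℝ → ℝ} {q v : ℝ × ℝ × ℝ}
    (hf : DifferentiableAt ℝ f q) (hg : DifferentiableAt ℝ g q) :
    fderiv ℝ (fun r => f r * g r) q v = fderiv ℝ f q v * g q + f q * fderiv ℝ g q v := by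
  rw [fderiv_fun_mul hf hg]
  simp only [ContinuousLinearMap.add_apply, ContinuousLinearMap.smul_apply, smul_eq_mul]
  ring

private lemma fd_sub {f g : ℝ × ℝ × ℝ → ℝ} {q v : ℝ × ℝ × ℝ}
    (hf : DifferentiableAt ℝ f q) (hg : DifferentiableAt ℝ g q) :
    fderiv ℝ (fun r => f r - g r) q v = fderiv ℝ f q v - fderiv ℝ g q v := by
  rw [fderiv_fun_sub hf hg]; simp

private lemma fd_expneg {c : ℝ × ℝ × ℝ → ℝ} {q v : ℝ × ℝ × ℝ}
    (hc : DifferentiableAt ℝ c q) :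
    fderiv ℝ (fun r => Real.exp (-(c r))) q v = -(fderiv ℝ c q v) * Real.exp (-(c q)) := by
  rw [fderiv_exp (f := fun r => -(c r)) hc.neg, fderiv_fun_neg]
  simp only [ContinuousLinearMap.neg_apply, ContinuousLinearMap.smul_apply, smul_eq_mul]
  ring

theorem stmt4' (U : Set (ℝ × ℝ × ℝ)) (hU : IsOpen U)
    (n c : ℝ × ℝ × ℝ → ℝ) (u₁ u₂ : ℝ × ℝ × ℝ → ℝ)
    (hn : ContDiffOn ℝ 2 n U) (hc : ContDiffOn ℝ 2 c U)
    (heqn : ∀ q ∈ U,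
      fderiv ℝ n q (1,0,0) + (u₁ q * fderiv ℝ n q (0,1,0) + u₂ q * fderiv ℝ n q (0,0,1)) +
          (fderiv ℝ (fun r => n r * fderiv ℝ c r (0,1,0)) q (0,1,0)
            + fderiv ℝ (fun r => n r * fderiv ℝ c r (0,0,1)) q (0,0,1)) =
        fderiv ℝ (fun r => fderiv ℝ n r (0,1,0)) q (0,1,0)
          + fderiv ℝ (fun r => fderiv ℝ n r (0,0,1)) q (0,0,1))
    (heqc : ∀ q ∈ U,
      fderiv ℝ c q (1,0,0) + (u₁ q * fderiv ℝ c q (0,1,0) + u₂ q * fderiv ℝ c q (0,0,1))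
          + n q * c q =
        fderiv ℝ (fun r => fderiv ℝ c r (0,1,0)) q (0,1,0)
          + fderiv ℝ (fun r => fderiv ℝ c r (0,0,1)) q (0,0,1)) :
    ∀ q ∈ U,
      fderiv ℝ (fun r => n r * Real.exp (-(c r))) q (1,0,0) =
        (fderiv ℝ (fun r => fderiv ℝ (fun r' => n r' * Real.exp (-(c r'))) r (0,1,0)) q (0,1,0)
          + fderiv ℝ (fun r => fderiv ℝ (fun r' => n r' * Real.exp (-(c r'))) r (0,0,1)) q (0,0,1))
        + ((fderiv ℝ (fun r => n r * Real.exp (-(c r))) q (0,1,0) * fderiv ℝ c q (0,1,0)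
            + fderiv ℝ (fun r => n r * Real.exp (-(c r))) q (0,0,1) * fderiv ℝ c q (0,0,1))
          + (n q * Real.exp (-(c q))) *
            (fderiv ℝ (fun r => fderiv ℝ c r (0,1,0)) q (0,1,0)
              + fderiv ℝ (fun r => fderiv ℝ c r (0,0,1)) q (0,0,1)))
        - (u₁ q * fderiv ℝ (fun r => n r * Real.exp (-(c r))) q (0,1,0)
            + u₂ q * fderiv ℝ (fun r => n r * Real.exp (-(c r))) q (0,0,1))
        + n q * c q * (n q * Real.exp (-(c q)))
        - 2 * (n q * Real.exp (-(c q))) *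
            (fderiv ℝ (fun r => fderiv ℝ c r (0,1,0)) q (0,1,0)
              + fderiv ℝ (fun r => fderiv ℝ c r (0,0,1)) q (0,0,1)) := by
  intro q hq
  have hqU : U ∈ nhds q := hU.mem_nhds hq
  have hdn : ∀ r ∈ U, DifferentiableAt ℝ n r := fun r hr =>
    (hn.contDiffAt (hU.mem_nhds hr)).differentiableAt two_ne_zero
  have hdc : ∀ r ∈ U, DifferentiableAt ℝ c r := fun r hr =>
    (hc.contDiffAt (hU.mem_nhds hr)).differentiableAt two_ne_zero
  have hde : ∀ r ∈ U, DifferentiableAt ℝ (fun r' => Real.exp (-(c r'))) r := fun r hr =>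
    ((hdc r hr).neg).exp
  -- differentiability of first-derivative functions at points of U
  have hDn : ∀ w : ℝ × ℝ × ℝ, ∀ r ∈ U, DifferentiableAt ℝ (fun r' => fderiv ℝ n r' w) r := by
    intro w r hr
    have h1 : ContDiffOn ℝ 1 (fderiv ℝ n) U := hn.fderiv_of_isOpen hU (by norm_num)
    have h2 : DifferentiableAt ℝ (fderiv ℝ n) r :=
      ((h1.differentiableOn one_ne_zero) r hr).differentiableAt (hU.mem_nhds hr)
    exact h2.clm_apply (differentiableAt_const w)
  have hDc : ∀ w : ℝ × ℝ × ℝ, ∀ r ∈ U, DifferentiableAt ℝ (fun r' => fderiv ℝ c r' w) r := by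
    intro w r hr
    have h1 : ContDiffOn ℝ 1 (fderiv ℝ c) U := hc.fderiv_of_isOpen hU (by norm_num)
    have h2 : DifferentiableAt ℝ (fderiv ℝ c) r :=
      ((h1.differentiableOn one_ne_zero) r hr).differentiableAt (hU.mem_nhds hr)
    exact h2.clm_apply (differentiableAt_const w)
  -- first derivative of nt
  have key : ∀ w : ℝ × ℝ × ℝ, ∀ r ∈ U,
      fderiv ℝ (fun r' => n r' * Real.exp (-(c r'))) r w =
        (fderiv ℝ n r w - n r * fderiv ℝ c r w) * Real.exp (-(c r)) := by
    intro w r hr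
    rw [fd_mul (hdn r hr) (hde r hr), fd_expneg (hdc r hr)]
    ring
  -- second derivative of nt
  have second : ∀ w v : ℝ × ℝ × ℝ,
      fderiv ℝ (fun r => fderiv ℝ (fun r' => n r' * Real.exp (-(c r'))) r w) q v =
        ((fderiv ℝ (fun r => fderiv ℝ n r w) q v
          - (fderiv ℝ n q v * fderiv ℝ c q w + n q * fderiv ℝ (fun r => fderiv ℝ c r w) q v))
          - (fderiv ℝ n q w - n q * fderiv ℝ c q w) * fderiv ℝ c q v) * Real.exp (-(c q)) := by
    intro w v
    have hee : (fun r => fderiv ℝ (fun r' => n r' * Real.exp (-(c r'))) r w) =ᶠ[nhds q]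
        (fun r => (fderiv ℝ n r w - n r * fderiv ℝ c r w) * Real.exp (-(c r))) := by
      filter_upwards [hqU] with r hr using key w r hr
    rw [Filter.EventuallyEq.fderiv_eq hee]
    have d1 : DifferentiableAt ℝ (fun r => fderiv ℝ n r w) q := hDn w q hq
    have d2 : DifferentiableAt ℝ (fun r => n r * fderiv ℝ c r w) q :=
      (hdn q hq).mul (hDc w q hq)
    rw [fd_mul (f := fun r => fderiv ℝ n r w - n r * fderiv ℝ c r w) (d1.sub d2) (hde q hq), fd_sub d1 d2, fd_mul (hdn q hq) (hDc w q hq),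
      fd_expneg (hdc q hq)]
    ring
  -- expand the divergence terms in heqn
  have hn' := heqn q hq
  have hc' := heqc q hq
  rw [fd_mul (hdn q hq) (hDc (0,1,0) q hq), fd_mul (hdn q hq) (hDc (0,0,1) q hq)] at hn'
  rw [key (1,0,0) q hq, key (0,1,0) q hq, key (0,0,1) q hq, second (0,1,0) (0,1,0),
    second (0,0,1) (0,0,1)]
  linear_combination (Real.exp (-(c q))) * hn' - (n q * Real.exp (-(c q))) * hc'



/-- The interior equation of the transformed system (2.23): if `n, c` solve
`∂_t n + u·∇n + ∇·(n∇c) = Δn` and `∂_t c + u·∇c + nc = Δc` on an open set `U ⊆ ℝ × ℝ²`,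
then `nt = n e^{−c}` satisfies `∂_t nt = Δnt + ∇nt·∇c + ntΔc − u·∇nt + ncnt − 2ntΔc` on `U`. -/
theorem stmt4 (U : Set (ℝ × ℝ × ℝ)) (hU : IsOpen U)
    (n c : ℝ × ℝ × ℝ → ℝ) (u₁ u₂ : ℝ × ℝ × ℝ → ℝ)
    (hn : ContDiffOn ℝ 2 n U) (hc : ContDiffOn ℝ 2 c U)
    (heqn : ∀ q ∈ U,
      pt n q + (u₁ q * px1 n q + u₂ q * px2 n q) +
          (px1 (fun r => n r * px1 c r) q + px2 (fun r => n r * px2 c r) q) =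
        plap n q)
    (heqc : ∀ q ∈ U,
      pt c q + (u₁ q * px1 c q + u₂ q * px2 c q) + n q * c q = plap c q)
    (nt : ℝ × ℝ × ℝ → ℝ) (hnt : nt = fun r => n r * Real.exp (-(c r))) :
    ∀ q ∈ U,
      pt nt q =
        plap nt q + ((px1 nt q * px1 c q + px2 nt q * px2 c q) + nt q * plap c q) -
            (u₁ q * px1 nt q + u₂ q * px2 nt q) +
          n q * c q * nt q - 2 * nt q * plap c q := by
  subst hnt
  intro q hq
  simp only [pt, px1, px2, plap] at heqn heqc ⊢
  exact stmt4' U hU n c u₁ u₂ hn hc heqn heqc q hq
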